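/- arXiv:1109.6076 — 3 statements merged into one kernel-verified Lean document; each statement's English description precedes it below -/
import Mathlib

section
/- For every positive integer N, setting t = 2^{2^N}, the point x_0 = 2 - 2^{2^N} satisfies φ_t^N(x_0) = 0, where φ_t(x) = (x+t)^2 - t. Consequently, for each N there exists an integer t such that the set of rational iterated preimages of 0 under φ_t has cardinality at least N. -/
/-!
Conjugating by the translation `y ↦ y + t` turns `φ_t(y) = (y + t)^2 - t` into squaring, so
`φ_t^k(x) = (x + t)^(2^k) - t`. Hence `2^(2^j) - t` reaches `0` after `N - j` steps when
`t = 2^(2^N)` and `j ≤ N`, and the points for `j < N` are pairwise distinct.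
-/

theorem iterate_sq_add_sub_apply {R : Type*} [Ring R] (t : R) (k : ℕ) (x : R) :
    (fun y : R => (y + t) ^ 2 - t)^[k] x = (x + t) ^ 2 ^ k - t := by
  induction k generalizing x with
  | zero => simp
  | succ k ih =>
    rw [Function.iterate_succ_apply, ih, sub_add_cancel, ← pow_mul, ← pow_succ']

theorem iterate_sq_add_sub_two_pow_two_pow {R : Type*} [Ring R] {j N : ℕ} (hjN : j ≤ N) :
    (fun y : R => (y + 2 ^ 2 ^ N) ^ 2 - 2 ^ 2 ^ N)^[N - j] (2 ^ 2 ^ j - 2 ^ 2 ^ N) = 0 := by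
  rw [iterate_sq_add_sub_apply, sub_add_cancel, ← pow_mul, ← pow_add, Nat.add_sub_cancel' hjN,
    sub_self]

theorem strictMono_two_pow_two_pow_sub {R : Type*} [Ring R] [PartialOrder R]
    [IsStrictOrderedRing R] (c : R) :
    StrictMono fun j : ℕ => (2 : R) ^ 2 ^ j - c := fun _ _ hij =>
  sub_lt_sub_right (pow_right_strictMono₀ one_lt_two (Nat.pow_lt_pow_right one_lt_two hij)) c

theorem stmt_1_general (N : ℕ) :
    ((fun y : ℚ => (y + 2 ^ 2 ^ N) ^ 2 - 2 ^ 2 ^ N)^[N] (2 - 2 ^ 2 ^ N) = 0) ∧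
    ∃ t : ℤ, ∃ S : Finset ℚ, N ≤ S.card ∧
      ∀ x ∈ S, ∃ M : ℕ, 1 ≤ M ∧ (fun y : ℚ => (y + (t : ℚ)) ^ 2 - t)^[M] x = 0 := by
  refine ⟨by simpa using iterate_sq_add_sub_two_pow_two_pow (R := ℚ) (Nat.zero_le N),
    2 ^ 2 ^ N, (Finset.range N).image fun j => (2 : ℚ) ^ 2 ^ j - 2 ^ 2 ^ N, ?_, ?_⟩
  · rw [Finset.card_image_of_injective _ (strictMono_two_pow_two_pow_sub _).injective,
      Finset.card_range]
  · simp only [Finset.mem_image, Finset.mem_range, forall_exists_index, and_imp]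
    rintro _ j hjN rfl
    refine ⟨N - j, by omega, ?_⟩
    push_cast
    exact iterate_sq_add_sub_two_pow_two_pow hjN.le

/-- For every positive integer `N`, with `t = 2^(2^N)` the point `x₀ = 2 - 2^(2^N)`
satisfies `φ_t^N(x₀) = 0` where `φ_t(x) = (x+t)^2 - t`; consequently for each `N` there
is an integer `t` such that the set of rational iterated preimages of `0` under `φ_t`
has cardinality at least `N`. -/
theorem stmt_1 (N : ℕ) (hN : 0 < N) :
    ((fun y : ℚ => (y + 2 ^ 2 ^ N) ^ 2 - 2 ^ 2 ^ N)^[N] (2 - 2 ^ 2 ^ N) = 0) ∧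
    ∃ t : ℤ, ∃ S : Finset ℚ, N ≤ S.card ∧
      ∀ x ∈ S, ∃ M : ℕ, 1 ≤ M ∧ (fun y : ℚ => (y + (t : ℚ)) ^ 2 - t)^[M] x = 0 :=
  stmt_1_general N
end

section
/- Let K be a number field, S a finite set of places of K containing the archimedean places, and let φ(x) = (x^d + a_{d-1}x^{d-1} + ⋯ + a_1 x)/(b_{d-1}x^{d-1} + ⋯ + b_1 x + 1) with all a_i, b_i S-integers. If x_0 ∈ O_{K,S}^× is an S-unit and x_1 ∈ K satisfies x_1^d + a_{d-1}x_1^{d-1} + ⋯ + a_1 x_1 = (b_{d-1}x_1^{d-1} + ⋯ + b_1 x_1 + 1)·x_0, then x_1 is an S-unit. -/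
open IsDedekindDomain NumberField

/-!
Fix a finite place `v ∉ S` and compare valuations of the two sides of the equation. If
`v x₁ > 1`, the monic term dominates: the left side has valuation `(v x₁)^d` while the right
side has valuation at most `(v x₁)^(d-1)`. If `v x₁ < 1`, every term on the left carries a
factor `x₁`, so the left side has valuation `< 1`, while the right side is a unit times
`1 + (something of valuation < 1)`, hence of valuation `1`.
-/

namespace Valuation

variable {R Γ₀ : Type*} [Ring R] [LinearOrderedCommGroupWithZero Γ₀] (v : Valuation R Γ₀)

theorem map_mul_pow_le {c x : R} (hc : v c ≤ 1) (i : ℕ) : v (c * x ^ i) ≤ v x ^ i := by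
  simpa only [map_mul, map_pow] using mul_le_of_le_one_left' hc

theorem map_sum_mul_pow_le_of_le_one {s : Finset ℕ} {c : ℕ → R} {x : R}
    (hs : ∀ i ∈ s, 1 ≤ i) (hc : ∀ i ∈ s, v (c i) ≤ 1) (hx : v x ≤ 1) :
    v (∑ i ∈ s, c i * x ^ i) ≤ v x :=
  v.map_sum_le fun i hi =>
    (v.map_mul_pow_le (hc i hi) i).trans
      (pow_le_of_le_one zero_le hx (Nat.one_le_iff_ne_zero.mp (hs i hi)))

theorem map_sum_mul_pow_le_of_one_le {s : Finset ℕ} {c : ℕ → R} {x : R} {n : ℕ}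
    (hs : ∀ i ∈ s, i ≤ n) (hc : ∀ i ∈ s, v (c i) ≤ 1) (hx : 1 ≤ v x) :
    v (∑ i ∈ s, c i * x ^ i) ≤ v x ^ n :=
  v.map_sum_le fun i hi =>
    (v.map_mul_pow_le (hc i hi) i).trans (pow_le_pow_right' hx (hs i hi))

variable {d : ℕ} {a b : ℕ → R} {x₀ x₁ : R}

theorem le_one_of_pow_add_eq (ha : ∀ i ∈ Finset.Icc 1 (d - 1), v (a i) ≤ 1)
    (hb : ∀ i ∈ Finset.Icc 1 (d - 1), v (b i) ≤ 1) (hx₀ : v x₀ = 1)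
    (heq : x₁ ^ d + ∑ i ∈ Finset.Icc 1 (d - 1), a i * x₁ ^ i
      = (∑ i ∈ Finset.Icc 1 (d - 1), b i * x₁ ^ i + 1) * x₀) (hd : 0 < d) : v x₁ ≤ 1 := by
  by_contra! hx₁
  have hle : ∀ i ∈ Finset.Icc 1 (d - 1), i ≤ d - 1 := fun i hi => (Finset.mem_Icc.mp hi).2
  have hlt : v x₁ ^ (d - 1) < v x₁ ^ d := pow_lt_pow_right₀ hx₁ (by omega)
  have hA := v.map_sum_mul_pow_le_of_one_le hle ha hx₁.le
  have hB := v.map_sum_mul_pow_le_of_one_le hle hb hx₁.le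
  have hlhs : v (x₁ ^ d + ∑ i ∈ Finset.Icc 1 (d - 1), a i * x₁ ^ i) = v x₁ ^ d := by
    rw [v.map_add_eq_of_lt_left (by rw [map_pow]; exact hA.trans_lt hlt), map_pow]
  have hrhs : v ((∑ i ∈ Finset.Icc 1 (d - 1), b i * x₁ ^ i + 1) * x₀) ≤ v x₁ ^ (d - 1) := by
    rw [map_mul, hx₀, mul_one]
    exact v.map_add_le hB (v.map_one ▸ one_le_pow₀ hx₁.le)
  rw [← heq, hlhs] at hrhs
  exact not_lt_of_ge hrhs hlt

theorem one_le_of_pow_add_eq (ha : ∀ i ∈ Finset.Icc 1 (d - 1), v (a i) ≤ 1)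
    (hb : ∀ i ∈ Finset.Icc 1 (d - 1), v (b i) ≤ 1) (hx₀ : v x₀ = 1)
    (heq : x₁ ^ d + ∑ i ∈ Finset.Icc 1 (d - 1), a i * x₁ ^ i
      = (∑ i ∈ Finset.Icc 1 (d - 1), b i * x₁ ^ i + 1) * x₀) (hd : 0 < d) : 1 ≤ v x₁ := by
  by_contra! hx₁
  have hge : ∀ i ∈ Finset.Icc 1 (d - 1), 1 ≤ i := fun i hi => (Finset.mem_Icc.mp hi).1
  have hA := v.map_sum_mul_pow_le_of_le_one hge ha hx₁.le
  have hB := v.map_sum_mul_pow_le_of_le_one hge hb hx₁.le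
  have hlhs : v (x₁ ^ d + ∑ i ∈ Finset.Icc 1 (d - 1), a i * x₁ ^ i) < 1 := by
    refine v.map_add_lt ?_ (hA.trans_lt hx₁)
    rw [map_pow]
    exact pow_lt_one₀ zero_le hx₁ hd.ne'
  have hrhs : v ((∑ i ∈ Finset.Icc 1 (d - 1), b i * x₁ ^ i + 1) * x₀) = 1 := by
    rw [map_mul, hx₀, mul_one, v.map_add_eq_of_lt_right (by rw [map_one]; exact hB.trans_lt hx₁),
      map_one]
  rw [heq, hrhs] at hlhs
  exact hlhs.false

theorem eq_one_of_pow_add_eq (ha : ∀ i ∈ Finset.Icc 1 (d - 1), v (a i) ≤ 1)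
    (hb : ∀ i ∈ Finset.Icc 1 (d - 1), v (b i) ≤ 1) (hx₀ : v x₀ = 1)
    (heq : x₁ ^ d + ∑ i ∈ Finset.Icc 1 (d - 1), a i * x₁ ^ i
      = (∑ i ∈ Finset.Icc 1 (d - 1), b i * x₁ ^ i + 1) * x₀) (hd : 0 < d) : v x₁ = 1 :=
  le_antisymm (v.le_one_of_pow_add_eq ha hb hx₀ heq hd) (v.one_le_of_pow_add_eq ha hb hx₀ heq hd)

end Valuation

/-- Let `K` be a number field and `S` a finite set of (finite) places of `K` (the
archimedean places are implicitly contained in `S` since we only track finite places).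
Let `φ(x) = (x^d + a_{d-1}x^{d-1} + ⋯ + a_1 x)/(b_{d-1}x^{d-1} + ⋯ + b_1 x + 1)` with all
`a_i, b_i` `S`-integers.  If `x₀` is an `S`-unit and `x₁ ∈ K` satisfies
`x₁^d + ∑ a_i x₁^i = (∑ b_i x₁^i + 1) x₀`, then `x₁` is an `S`-unit. -/
theorem stmt_5 (K : Type*) [Field K] [NumberField K]
    (S : Finset (HeightOneSpectrum (𝓞 K))) (d : ℕ) (hd : 1 < d)
    (a b : ℕ → K)
    (ha : ∀ i, 1 ≤ i → i ≤ d - 1 → ∀ v : HeightOneSpectrum (𝓞 K), v ∉ S →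
      v.valuation K (a i) ≤ 1)
    (hb : ∀ i, 1 ≤ i → i ≤ d - 1 → ∀ v : HeightOneSpectrum (𝓞 K), v ∉ S →
      v.valuation K (b i) ≤ 1)
    (x₀ x₁ : K)
    (hx₀ : ∀ v : HeightOneSpectrum (𝓞 K), v ∉ S → v.valuation K x₀ = 1)
    (heq : x₁ ^ d + ∑ i ∈ Finset.Icc 1 (d - 1), a i * x₁ ^ i
      = (∑ i ∈ Finset.Icc 1 (d - 1), b i * x₁ ^ i + 1) * x₀) :
    ∀ v : HeightOneSpectrum (𝓞 K), v ∉ S → v.valuation K x₁ = 1 := fun v hv =>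
  (v.valuation K).eq_one_of_pow_add_eq
    (fun i hi => ha i (Finset.mem_Icc.mp hi).1 (Finset.mem_Icc.mp hi).2 v hv)
    (fun i hi => hb i (Finset.mem_Icc.mp hi).1 (Finset.mem_Icc.mp hi).2 v hv)
    (hx₀ v hv) heq (by omega)
end

section
/- Let v be a valuation on a field containing rational functions b, c, x over a base, with v(b) < 0 and v(c) < 0. Suppose x, x' satisfy x'·(x' + b − x·c) = x and v(x) + v(c) ≠ v(b). Then either v(x') = min{v(b), v(x) + v(c)} or v(x') = v(x) − min{v(b), v(x) + v(c)}; moreover in the first case v(x') ≤ v(b) < v(b) − v(c), and in the second case v(x') > v(b) − v(c). Consequently v(x') + v(c) ≠ v(b). -/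
/-- Valuation dichotomy (inductive step for points at infinity for
`φ_t = (x²+bx)/(cx+1)`).  Let `v` be a discrete valuation with `v(b) < 0`, `v(c) < 0`.
If `x'·(x' + b − x·c) = x` and `v(x) + v(c) ≠ v(b)`, then either
`v(x') = min{v(b), v(x)+v(c)}`, in which case `v(x') ≤ v(b) < v(b) − v(c)`, or
`v(x') = v(x) − min{v(b), v(x)+v(c)}`, in which case `v(x') > v(b) − v(c)`.
Consequently `v(x') + v(c) ≠ v(b)`. -/
theorem stmt_17 {L : Type*} [Field L] (v : L → ℤ)
    (hmul : ∀ u w : L, u ≠ 0 → w ≠ 0 → v (u * w) = v u + v w)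
    (hadd : ∀ u w : L, u ≠ 0 → w ≠ 0 → u + w ≠ 0 → min (v u) (v w) ≤ v (u + w))
    (hadd' : ∀ u w : L, u ≠ 0 → w ≠ 0 → v u ≠ v w → v (u + w) = min (v u) (v w))
    (b c x x' : L) (hb : b ≠ 0) (hc : c ≠ 0) (hx : x ≠ 0) (hx' : x' ≠ 0)
    (hvb : v b < 0) (hvc : v c < 0)
    (heq : x' * (x' + b - x * c) = x)
    (hne : v x + v c ≠ v b) :
    ((v x' = min (v b) (v x + v c) ∧ v x' ≤ v b ∧ v b < v b - v c) ∨
      (v x' = v x - min (v b) (v x + v c) ∧ v b - v c < v x')) ∧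
    v x' + v c ≠ v b := by
  have h1 : v 1 = 0 := by
    have := hmul 1 1 one_ne_zero one_ne_zero
    rw [one_mul] at this; omega
  have hneg1 : v (-1 : L) = 0 := by
    have := hmul (-1 : L) (-1) (by norm_num) (by norm_num)
    rw [neg_mul_neg, one_mul] at this; omega
  have hneg : ∀ u : L, u ≠ 0 → v (-u) = v u := by
    intro u hu
    have := hmul (-1 : L) u (by norm_num) hu
    rw [neg_one_mul] at this; omega
  have hxc : x * c ≠ 0 := mul_ne_zero hx hc
  have hvxc : v (x * c) = v x + v c := hmul x c hx hc
  have hbxc_ne : b - x * c ≠ 0 := by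
    intro h
    have : b = x * c := by linear_combination h
    rw [this, hvxc] at hne; exact hne rfl
  have hbxc : v (b - x * c) = min (v b) (v x + v c) := by
    have h2 : b - x * c = b + (-(x * c)) := by ring
    rw [h2, hadd' b (-(x * c)) hb (neg_ne_zero.mpr hxc)
      (by rw [hneg _ hxc, hvxc]; exact (Ne.symm hne)), hneg _ hxc, hvxc]
  have hy_ne : x' + b - x * c ≠ 0 := by
    intro h; rw [h, mul_zero] at heq; exact hx heq.symm
  have hsum : v x' + v (x' + b - x * c) = v x := by
    rw [← hmul x' _ hx' hy_ne, heq]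
  have hrw : x' + b - x * c = x' + (b - x * c) := by ring
  have hminb : min (v b) (v x + v c) ≤ v b := min_le_left _ _
  have hminc : min (v b) (v x + v c) ≤ v x + v c := min_le_right _ _
  have hd : (v x' = min (v b) (v x + v c) ∧ v x' ≤ v b ∧ v b < v b - v c) ∨
      (v x' = v x - min (v b) (v x + v c) ∧ v b - v c < v x') := by
    rcases eq_or_ne (v x') (min (v b) (v x + v c)) with h | h
    · left; exact ⟨h, by omega, by omega⟩
    · have hy : v (x' + (b - x * c)) = min (v x') (min (v b) (v x + v c)) := by
        rw [hadd' x' (b - x * c) hx' hbxc_ne (by rw [hbxc]; exact h), hbxc]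
      rw [hrw, hy] at hsum
      rcases lt_or_gt_of_ne h with hlt | hgt
      · exfalso; omega
      · right; constructor <;> omega
  refine ⟨hd, ?_⟩
  rcases hd with ⟨h, h2, _⟩ | ⟨h, h2⟩ <;> omega
end
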